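/- arXiv:1709.04936 — 3 statements merged into one kernel-verified Lean document; each statement's English description precedes it below -/
import Mathlib

section
/- For the sequence Z with Z_0 = 1, Z_1 = a, Z_{n+1} = a·Z_n + b·Z_{n-1} (0 < a < 1, b > 1 - a), the odd-index ratios are increasing and below λ₁ while the even-index ratios are decreasing and above λ₁: for every k ≥ 1, a ≤ Z_{2k-1}/Z_{2k-2} < Z_{2k+1}/Z_{2k} < λ₁ < Z_{2k+2}/Z_{2k+1} < Z_{2k}/Z_{2k-1} ≤ (a² + b)/a. -/
theorem stmt_4 (a b : ℝ) (ha0 : 0 < a) (ha1 : a < 1) (hb : b > 1 - a)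
    (Z : ℕ → ℝ) (hZ0 : Z 0 = 1) (hZ1 : Z 1 = a)
    (hrec : ∀ n : ℕ, 1 ≤ n → Z (n + 1) = a * Z n + b * Z (n - 1)) :
    ∀ k : ℕ, 1 ≤ k →
      a ≤ Z (2 * k - 1) / Z (2 * k - 2)
      ∧ Z (2 * k - 1) / Z (2 * k - 2) < Z (2 * k + 1) / Z (2 * k)
      ∧ Z (2 * k + 1) / Z (2 * k) < (a + Real.sqrt (a ^ 2 + 4 * b)) / 2
      ∧ (a + Real.sqrt (a ^ 2 + 4 * b)) / 2 < Z (2 * k + 2) / Z (2 * k + 1)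
      ∧ Z (2 * k + 2) / Z (2 * k + 1) < Z (2 * k) / Z (2 * k - 1)
      ∧ Z (2 * k) / Z (2 * k - 1) ≤ (a ^ 2 + b) / a := by
  have hb0 : 0 < b := by linarith
  set lam := (a + Real.sqrt (a ^ 2 + 4 * b)) / 2 with hlam
  set s := Real.sqrt (a ^ 2 + 4 * b) with hsdef
  have hs2 : s ^ 2 = a ^ 2 + 4 * b := Real.sq_sqrt (by nlinarith)
  have hsnn : 0 ≤ s := Real.sqrt_nonneg _
  have hsa : a < s := by nlinarith
  have hlam_gt : a < lam := by rw [hlam]; linarith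
  have hlam_pos : 0 < lam := lt_trans ha0 hlam_gt
  have hlam_eq : lam ^ 2 = a * lam + b := by
    rw [hlam]; linear_combination hs2 / 4
  have hlam_fix : a + b / lam = lam := by
    have h : b / lam = lam - a := by
      rw [div_eq_iff hlam_pos.ne']; nlinarith [hlam_eq]
    linarith
  -- positivity of Z
  have hZpos : ∀ n, 0 < Z n ∧ 0 < Z (n + 1) := by
    intro n
    induction n with
    | zero => constructor <;> simp [hZ0, hZ1, ha0]
    | succ m ih =>
      refine ⟨ih.2, ?_⟩
      rw [hrec (m + 1) (by omega)]
      simp only [Nat.add_sub_cancel]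
      nlinarith [ih.1, ih.2]
  -- ratios
  set r : ℕ → ℝ := fun n => Z (n + 1) / Z n with hrdef
  have hrpos : ∀ n, 0 < r n := fun n => div_pos (hZpos n).2 (hZpos n).1
  have hr0 : r 0 = a := by simp [hrdef, hZ0, hZ1]
  have hr_rec : ∀ n, r (n + 1) = a + b / r n := by
    intro n
    have hz1 : Z n ≠ 0 := (hZpos n).1.ne'
    have hz2 : Z (n + 1) ≠ 0 := (hZpos n).2.ne'
    have := hrec (n + 1) (by omega)
    simp only [Nat.add_sub_cancel] at this
    simp only [hrdef]
    rw [this]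
    field_simp
  -- map facts
  have hfa : ∀ x : ℝ, 0 < x → a < a + b / x := by
    intro x hx; have : 0 < b / x := div_pos hb0 hx; linarith
  have hf_gt : ∀ x : ℝ, 0 < x → x < lam → lam < a + b / x := by
    intro x hx hxl
    have : b / lam < b / x := div_lt_div_of_pos_left hb0 hx hxl
    linarith [hlam_fix]
  have hf_lt : ∀ x : ℝ, lam < x → a + b / x < lam := by
    intro x hxl
    have : b / x < b / lam := div_lt_div_of_pos_left hb0 hlam_pos hxl
    linarith [hlam_fix]
  have hsq_lt : ∀ x : ℝ, 0 < x → x < lam → x ^ 2 < a * x + b := by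
    intro x hx hxl
    nlinarith [mul_pos (sub_pos.2 hxl) (show 0 < x + lam - a by linarith)]
  have hsq_gt : ∀ x : ℝ, lam < x → a * x + b < x ^ 2 := by
    intro x hxl
    nlinarith [mul_pos (sub_pos.2 hxl) (show 0 < x + lam - a by linarith)]
  have step_lt : ∀ x : ℝ, 0 < x → x ^ 2 < a * x + b → x < a + b / (a + b / x) := by
    intro x hx hsq
    have hy : 0 < a + b / x := by positivity
    have key : a + b / (a + b / x) - x = a * (a * x + b - x ^ 2) / (x * (a + b / x)) := by
      field_simp
      ring
    nlinarith [div_pos (mul_pos ha0 (by linarith : (0:ℝ) < a * x + b - x ^ 2))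
      (mul_pos hx hy), key]
  have step_gt : ∀ x : ℝ, 0 < x → a * x + b < x ^ 2 → a + b / (a + b / x) < x := by
    intro x hx hsq
    have hy : 0 < a + b / x := by positivity
    have key : x - (a + b / (a + b / x)) = a * (x ^ 2 - (a * x + b)) / (x * (a + b / x)) := by
      field_simp
      ring
    nlinarith [div_pos (mul_pos ha0 (by linarith : (0:ℝ) < x ^ 2 - (a * x + b)))
      (mul_pos hx hy), key]
  -- main induction
  have main : ∀ m : ℕ, a ≤ r (2 * m) ∧ r (2 * m) < lam ∧ lam < r (2 * m + 1)
      ∧ r (2 * m + 1) ≤ a + b / a := by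
    intro m
    induction m with
    | zero =>
      simp only [Nat.mul_zero, Nat.zero_add]
      rw [hr_rec 0, hr0]
      exact ⟨le_refl a, hlam_gt, hf_gt a ha0 hlam_gt, le_refl _⟩
    | succ m ih =>
      obtain ⟨h1, h2, h3, h4⟩ := ih
      have e2 : 2 * (m + 1) + 1 = 2 * m + 1 + 1 + 1 := by ring
      have e1 : 2 * (m + 1) = 2 * m + 1 + 1 := by ring
      rw [e2, e1, hr_rec (2 * m + 1 + 1), hr_rec (2 * m + 1)]
      have hga : a < a + b / r (2 * m + 1) := hfa _ (hrpos _)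
      have hlt : a + b / r (2 * m + 1) < lam := hf_lt _ h3
      refine ⟨le_of_lt hga, hlt, hf_gt _ (by linarith) hlt, ?_⟩
      have : b / (a + b / r (2 * m + 1)) ≤ b / a :=
        div_le_div_of_nonneg_left hb0.le ha0 hga.le
      linarith
  intro k hk
  obtain ⟨m, rfl⟩ : ∃ m, k = m + 1 := ⟨k - 1, by omega⟩
  have i1 : 2 * (m + 1) - 1 = 2 * m + 1 := by omega
  have i2 : 2 * (m + 1) - 2 = 2 * m := by omega
  rw [i1, i2]
  obtain ⟨h1, h2, h3, h4⟩ := main m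
  obtain ⟨g1, g2, g3, g4⟩ := main (m + 1)
  rw [show 2 * (m + 1) = 2 * m + 2 from by ring] at g1 g2
  rw [show 2 * (m + 1) + 1 = 2 * m + 3 from by ring] at g3 g4
  have habe : (a ^ 2 + b) / a = a + b / a := by field_simp
  -- identify ratios with r
  show a ≤ r (2 * m) ∧ r (2 * m) < r (2 * m + 2) ∧ r (2 * m + 2) < lam
    ∧ lam < r (2 * m + 3) ∧ r (2 * m + 3) < r (2 * m + 1)
    ∧ r (2 * m + 1) ≤ (a ^ 2 + b) / a
  have hr2 : r (2 * m + 2) = a + b / (a + b / r (2 * m)) := by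
    rw [hr_rec (2 * m + 1), hr_rec (2 * m)]
  have hr3 : r (2 * m + 3) = a + b / (a + b / r (2 * m + 1)) := by
    rw [hr_rec (2 * m + 2), hr_rec (2 * m + 1)]
  refine ⟨h1, ?_, g2, g3, ?_, by rw [habe]; exact h4⟩
  · rw [hr2]
    exact step_lt _ (hrpos _) (hsq_lt _ (hrpos _) h2)
  · rw [hr3]
    exact step_gt _ (hrpos _) (hsq_gt _ h3)
end

section
/- For the sequence Z with Z_0 = 1, Z_1 = a, Z_{n+1} = a·Z_n + b·Z_{n-1} (0 < a < 1, b > 1 - a), the relative partial sums converge: lim_{n→∞} (1/Z_n)·∑_{k=0}^{n-1} Z_k = 1/(λ₁ - 1), where λ₁ = (a + √(a²+4b))/2. -/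
/-!
With `D = √(a² + 4b)`, the characteristic roots `λ₁ = (a + D)/2` and `λ₂ = (a - D)/2` of the
recursion give Binet's formula `Z n · (λ₁ - λ₂) = λ₁^(n+1) - λ₂^(n+1)`, so both `Z n` and the
partial sums are explicit combinations of geometric sums. Since `a + b > 1` we have
`D > |a - 2|`, hence `λ₂ < 1 < λ₁`, and `a > 0` gives `|λ₂| < λ₁`; dividing by `λ₁^(n+1)`, every
term involving `λ₂` vanishes in the limit and what remains is `∑_{j ≥ 1} λ₁⁻ʲ = 1/(λ₁ - 1)`.
-/

open Filter Topology Finset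

theorem binet_of_two_term_recurrence {R : Type*} [CommRing R] {a b l₁ l₂ : R}
    (hsum : l₁ + l₂ = a) (hprod : l₁ * l₂ = -b) {Z : ℕ → R} (hZ0 : Z 0 = 1) (hZ1 : Z 1 = a)
    (hrec : ∀ n : ℕ, 1 ≤ n → Z (n + 1) = a * Z n + b * Z (n - 1)) :
    ∀ n, Z n * (l₁ - l₂) = l₁ ^ (n + 1) - l₂ ^ (n + 1)
  | 0 => by rw [hZ0]; ring
  | 1 => by rw [hZ1, ← hsum]; ring
  | n + 2 => by
    have h₀ := binet_of_two_term_recurrence hsum hprod hZ0 hZ1 hrec n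
    have h₁ := binet_of_two_term_recurrence hsum hprod hZ0 hZ1 hrec (n + 1)
    rw [hrec (n + 1) (by omega), Nat.add_sub_cancel, ← hsum]
    linear_combination (l₁ + l₂) * h₁ + b * h₀ + (l₁ ^ (n + 1) - l₂ ^ (n + 1)) * hprod

theorem geom_sum_succ_div_pow_succ {m l : ℝ} (hm : m ≠ 1) (hl : l ≠ 0) (n : ℕ) :
    (∑ k ∈ range n, m ^ (k + 1)) / l ^ (n + 1) = m / (m - 1) * ((m / l) ^ n - l⁻¹ ^ n) / l := by
  have hm' : m - 1 ≠ 0 := sub_ne_zero.mpr hm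
  simp only [pow_succ, ← sum_mul, geom_sum_eq hm, div_pow, inv_pow]
  field_simp

theorem tendsto_sum_pow_sub_pow_div_pow_sub_pow {l₁ l₂ : ℝ} (hl₁ : 1 < l₁) (hl₂ : |l₂| < l₁)
    (hl₂_ne : l₂ ≠ 1) :
    Tendsto (fun n : ℕ =>
        (∑ k ∈ range n, (l₁ ^ (k + 1) - l₂ ^ (k + 1))) / (l₁ ^ (n + 1) - l₂ ^ (n + 1)))
      atTop (𝓝 (1 / (l₁ - 1))) := by
  have hl₁_pos : 0 < l₁ := by linarith
  have hr : |l₂ / l₁| < 1 := by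
    rw [abs_div, abs_of_pos hl₁_pos]; exact (div_lt_one hl₁_pos).mpr hl₂
  have hs : |l₁⁻¹| < 1 := by rw [abs_inv, abs_of_pos hl₁_pos]; exact inv_lt_one_of_one_lt₀ hl₁
  have hr_lim := tendsto_pow_atTop_nhds_zero_of_abs_lt_one hr
  have hs_lim := tendsto_pow_atTop_nhds_zero_of_abs_lt_one hs
  have hform : ∀ n : ℕ,
      (∑ k ∈ range n, (l₁ ^ (k + 1) - l₂ ^ (k + 1))) / (l₁ ^ (n + 1) - l₂ ^ (n + 1)) =
        (l₁ / (l₁ - 1) * ((l₁ / l₁) ^ n - l₁⁻¹ ^ n) / l₁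
            - l₂ / (l₂ - 1) * ((l₂ / l₁) ^ n - l₁⁻¹ ^ n) / l₁) /
          (1 - (l₂ / l₁) ^ (n + 1)) := by
    intro n
    have hpow : l₁ ^ (n + 1) ≠ 0 := pow_ne_zero _ hl₁_pos.ne'
    rw [← div_div_div_cancel_right₀ hpow]
    congr 1
    · rw [sum_sub_distrib, sub_div, geom_sum_succ_div_pow_succ hl₁.ne' hl₁_pos.ne',
        geom_sum_succ_div_pow_succ hl₂_ne hl₁_pos.ne']
    · rw [sub_div, div_self hpow, div_pow]
  simp_rw [hform, div_self hl₁_pos.ne', one_pow]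
  have hnum :=
    ((((tendsto_const_nhds (x := (1 : ℝ))).sub hs_lim).const_mul (l₁ / (l₁ - 1))).div_const l₁).sub
      (((hr_lim.sub hs_lim).const_mul (l₂ / (l₂ - 1))).div_const l₁)
  have hden := tendsto_const_nhds (x := (1 : ℝ)).sub (hr_lim.comp (tendsto_add_atTop_nat 1))
  convert hnum.div hden (by norm_num) using 2
  · rfl
  · field_simp [(sub_pos.mpr hl₁).ne']
    ring

theorem stmt_6_general (a b : ℝ) (ha0 : 0 < a) (hb : a + b > 1)
    (Z : ℕ → ℝ) (hZ0 : Z 0 = 1) (hZ1 : Z 1 = a)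
    (hrec : ∀ n : ℕ, 1 ≤ n → Z (n + 1) = a * Z n + b * Z (n - 1)) :
    Tendsto (fun n : ℕ => (∑ k ∈ Finset.range n, Z k) / Z n) atTop
      (nhds (1 / ((a + Real.sqrt (a ^ 2 + 4 * b)) / 2 - 1))) := by
  set D := Real.sqrt (a ^ 2 + 4 * b)
  have hdisc : (a - 2) ^ 2 < a ^ 2 + 4 * b := by nlinarith
  have hD : |a - 2| < D := by
    rw [← Real.sqrt_sq_eq_abs]; exact Real.sqrt_lt_sqrt (sq_nonneg _) hdisc
  have hD_sq : D ^ 2 = a ^ 2 + 4 * b := Real.sq_sqrt (by nlinarith)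
  set l₁ := (a + D) / 2 with hl₁_def
  set l₂ := (a - D) / 2 with hl₂_def
  have hl₁ : 1 < l₁ := by linarith [neg_abs_le (a - 2)]
  have hl₂ : l₂ < 1 := by linarith [le_abs_self (a - 2)]
  have hl₂_abs : |l₂| < l₁ := abs_lt.mpr ⟨by linarith, by linarith [abs_nonneg (a - 2)]⟩
  have hbinet := binet_of_two_term_recurrence (l₁ := l₁) (l₂ := l₂) (by ring)
    (by linear_combination -hD_sq / 4) hZ0 hZ1 hrec
  have hdiff : l₁ - l₂ ≠ 0 := by linarith [abs_nonneg (a - 2)]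
  have hratio : ∀ n, (∑ k ∈ range n, Z k) / Z n =
      (∑ k ∈ range n, (l₁ ^ (k + 1) - l₂ ^ (k + 1))) / (l₁ ^ (n + 1) - l₂ ^ (n + 1)) := fun n => by
    rw [← mul_div_mul_right _ _ hdiff, sum_mul]; simp only [hbinet]
  simp_rw [hratio]
  exact tendsto_sum_pow_sub_pow_div_pow_sub_pow hl₁ hl₂_abs hl₂.ne

theorem stmt_6 (a b : ℝ) (ha0 : 0 < a) (ha1 : a < 1) (hb : a + b > 1)
    (Z : ℕ → ℝ) (hZ0 : Z 0 = 1) (hZ1 : Z 1 = a)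
    (hrec : ∀ n : ℕ, 1 ≤ n → Z (n + 1) = a * Z n + b * Z (n - 1)) :
    Tendsto (fun n : ℕ => (∑ k ∈ Finset.range n, Z k) / Z n) atTop
      (nhds (1 / ((a + Real.sqrt (a ^ 2 + 4 * b)) / 2 - 1))) :=
  stmt_6_general a b ha0 hb Z hZ0 hZ1 hrec
end

section
/- Let η_0, η_1, ... be i.i.d. Bernoulli random variables with P(η_k = 1) = 1 − ε, P(η_k = 0) = ε, ε ∈ (0,1), and let X_{n+1} = a·X_n + b·η_{n-1}·X_{n-1} with X_0 = 1, X_1 = a, 0 < a < 1, b > 1 − a. Then E[X_n] = (λ₁'^{n+1} − λ₂'^{n+1})/(λ₁' − λ₂') for all n ≥ 0, where λ₁' and λ₂' are the roots of λ² = aλ + b(1 − ε). -/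
open MeasureTheory ProbabilityTheory

/-!
`X n` is a deterministic function of `η 0, …, η (n - 2)`, so it is independent of `η (n - 1)`.
Taking expectations in the recursion therefore gives the linear recurrence
`m (n + 1) = a m n + b (1 - ε) m (n - 1)` for the means, whose characteristic roots are
`λ₁'` and `λ₂'`; the closed form is Binet's formula for it.
-/

theorem mul_sub_eq_pow_succ_sub_pow_succ_of_recurrence {R : Type*} [CommRing R] {x y : R}
    {m : ℕ → R} (h0 : m 0 = 1) (h1 : m 1 = x + y)
    (hrec : ∀ k, m (k + 2) = (x + y) * m (k + 1) - x * y * m k) :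
    ∀ n, m n * (x - y) = x ^ (n + 1) - y ^ (n + 1)
  | 0 => by simp [h0]
  | 1 => by rw [h1]; ring
  | k + 2 => by
    have ih₁ := mul_sub_eq_pow_succ_sub_pow_succ_of_recurrence h0 h1 hrec (k + 1)
    have ih₀ := mul_sub_eq_pow_succ_sub_pow_succ_of_recurrence h0 h1 hrec k
    rw [hrec]
    linear_combination (x + y) * ih₁ - x * y * ih₀

/-- `X n` as a function of the noise sequence `e = (η k ω)ₖ`. -/
noncomputable def noisyRec (a b : ℝ) : ℕ → (ℕ → ℝ) → ℝ
  | 0 => fun _ => 1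
  | 1 => fun _ => a
  | k + 2 => fun e => a * noisyRec a b (k + 1) e + b * e k * noisyRec a b k e

section noisyRec

variable {a b : ℝ}

@[fun_prop]
theorem measurable_noisyRec : ∀ k, Measurable (noisyRec a b k)
  | 0 => measurable_const
  | 1 => measurable_const
  | k + 2 => by
    have := measurable_noisyRec (k + 1)
    have := measurable_noisyRec k
    unfold noisyRec
    fun_prop

theorem noisyRec_congr : ∀ k {e e' : ℕ → ℝ}, (∀ i < k, e i = e' i) →
    noisyRec a b k e = noisyRec a b k e'
  | 0, _, _, _ => rfl
  | 1, _, _, _ => rfl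
  | k + 2, e, e', h => by
    simp only [noisyRec]
    rw [noisyRec_congr (k + 1) fun i hi => h i (by omega),
      noisyRec_congr k fun i hi => h i (by omega), h k (by omega)]

theorem eq_noisyRec_of_recurrence {Ω : Type*} {η X : ℕ → Ω → ℝ} (hX0 : ∀ ω, X 0 ω = 1)
    (hX1 : ∀ ω, X 1 ω = a)
    (hrec : ∀ n : ℕ, 1 ≤ n → ∀ ω, X (n + 1) ω = a * X n ω + b * η (n - 1) ω * X (n - 1) ω) :
    ∀ n ω, X n ω = noisyRec a b n (fun i => η i ω)
  | 0, ω => hX0 ω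
  | 1, ω => hX1 ω
  | k + 2, ω => by
    rw [hrec (k + 1) (by omega), Nat.add_sub_cancel, eq_noisyRec_of_recurrence hX0 hX1 hrec (k + 1),
      eq_noisyRec_of_recurrence hX0 hX1 hrec k]
    rfl

variable {Ω : Type*} [MeasurableSpace Ω] {μ : Measure Ω} {η : ℕ → Ω → ℝ}

theorem integrable_noisyRec [IsFiniteMeasure μ] (hmeas : ∀ k, Measurable (η k)) {C : ℝ}
    (hbdd : ∀ k ω, ‖η k ω‖ ≤ C) : ∀ n, Integrable (fun ω => noisyRec a b n (η · ω)) μ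
  | 0 => integrable_const 1
  | 1 => integrable_const a
  | k + 2 => by
    have h₁ := (integrable_noisyRec hmeas hbdd (k + 1)).const_mul a
    have h₀ := ((integrable_noisyRec hmeas hbdd k).bdd_mul (hmeas k).aestronglyMeasurable
      (.of_forall (hbdd k))).const_mul b
    simp only [noisyRec, mul_assoc]
    exact h₁.add h₀

theorem indepFun_noisyRec (hmeas : ∀ k, Measurable (η k)) (hindep : iIndepFun η μ) (k : ℕ) :
    IndepFun (fun ω => noisyRec a b k (η · ω)) (η k) μ := by
  classical
  let restrict (e : Finset.range k → ℝ) (i : ℕ) : ℝ :=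
    if h : i ∈ Finset.range k then e ⟨i, h⟩ else 0
  have h_restrict : Measurable restrict := measurable_pi_lambda _ fun i => by
    dsimp only [restrict]
    split_ifs
    exacts [measurable_pi_apply _, measurable_const]
  have h_eval : Measurable fun e : ({k} : Finset ℕ) → ℝ => e ⟨k, Finset.mem_singleton_self k⟩ :=
    measurable_pi_apply _
  have h := (hindep.indepFun_finset (Finset.range k) {k} (by simp) hmeas).comp
    ((measurable_noisyRec (a := a) (b := b) k).comp h_restrict) h_eval
  have h_fun : (fun ω => noisyRec a b k (η · ω))
      = noisyRec a b k ∘ restrict ∘ fun ω (i : Finset.range k) => η i ω :=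
    funext fun ω => noisyRec_congr k fun i hi => by simp [restrict, hi]
  rw [h_fun]
  exact h

theorem integral_noisyRec_add_two [IsFiniteMeasure μ] (hmeas : ∀ k, Measurable (η k))
    (hindep : iIndepFun η μ) {C : ℝ} (hbdd : ∀ k ω, ‖η k ω‖ ≤ C) (k : ℕ) :
    ∫ ω, noisyRec a b (k + 2) (η · ω) ∂μ
      = a * ∫ ω, noisyRec a b (k + 1) (η · ω) ∂μ
        + b * (∫ ω, η k ω ∂μ) * ∫ ω, noisyRec a b k (η · ω) ∂μ := by
  have h_prod := (indepFun_noisyRec (a := a) (b := b) hmeas hindep k).symm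
    |>.integral_fun_mul_eq_mul_integral (hmeas k).aestronglyMeasurable
      ((measurable_noisyRec k).comp (measurable_pi_lambda _ hmeas)).aestronglyMeasurable
  simp only [noisyRec, mul_assoc]
  rw [integral_add ((integrable_noisyRec hmeas hbdd _).const_mul a)
      (((integrable_noisyRec hmeas hbdd k).bdd_mul (hmeas k).aestronglyMeasurable
        (.of_forall (hbdd k))).const_mul b),
    integral_const_mul, integral_const_mul, h_prod]

end noisyRec

theorem integral_eq_measureReal_of_zero_or_one {Ω : Type*} [MeasurableSpace Ω] {μ : Measure Ω}
    {f : Ω → ℝ} (hf : Measurable f) (h01 : ∀ ω, f ω = 0 ∨ f ω = 1) :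
    ∫ ω, f ω ∂μ = μ.real {ω | f ω = 1} := by
  have h_set : MeasurableSet {ω | f ω = 1} := hf (measurableSet_singleton 1)
  rw [← integral_indicator_one h_set]
  congr with ω
  rcases h01 ω with h | h <;> simp [h]

theorem stmt_12_general (a b ε : ℝ) (ha1 : a < 1) (hb : b > 1 - a)
    (hε1 : ε < 1)
    {Ω : Type*} [MeasurableSpace Ω] (μ : Measure Ω) [IsProbabilityMeasure μ]
    (η : ℕ → Ω → ℝ) (hmeas : ∀ k, Measurable (η k))
    (hval : ∀ k ω, η k ω = 0 ∨ η k ω = 1)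
    (hindep : iIndepFun η μ)
    (hBer : ∀ k, μ {ω | η k ω = 1} = ENNReal.ofReal (1 - ε))
    (X : ℕ → Ω → ℝ) (hX0 : ∀ ω, X 0 ω = 1) (hX1 : ∀ ω, X 1 ω = a)
    (hrec : ∀ n : ℕ, 1 ≤ n → ∀ ω,
      X (n + 1) ω = a * X n ω + b * η (n - 1) ω * X (n - 1) ω) :
    ∀ n : ℕ,
      (∫ ω, X n ω ∂μ)
        = (((a + Real.sqrt (a ^ 2 + 4 * b * (1 - ε))) / 2) ^ (n + 1)
            - ((a - Real.sqrt (a ^ 2 + 4 * b * (1 - ε))) / 2) ^ (n + 1))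
          / ((a + Real.sqrt (a ^ 2 + 4 * b * (1 - ε))) / 2
            - (a - Real.sqrt (a ^ 2 + 4 * b * (1 - ε))) / 2) := by
  intro n
  have h_disc : 0 < a ^ 2 + 4 * b * (1 - ε) := by nlinarith
  set s := Real.sqrt (a ^ 2 + 4 * b * (1 - ε))
  have hs_sq : s ^ 2 = a ^ 2 + 4 * b * (1 - ε) := Real.sq_sqrt h_disc.le
  have h_mean_η (k : ℕ) : ∫ ω, η k ω ∂μ = 1 - ε := by
    rw [integral_eq_measureReal_of_zero_or_one (hmeas k) (hval k), measureReal_def, hBer,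
      ENNReal.toReal_ofReal (by linarith)]
  have h_bdd (k : ℕ) (ω : Ω) : ‖η k ω‖ ≤ 1 := by rcases hval k ω with h | h <;> simp [h]
  rw [eq_div_iff (by linarith [Real.sqrt_pos.2 h_disc])]
  simp only [eq_noisyRec_of_recurrence hX0 hX1 hrec]
  refine mul_sub_eq_pow_succ_sub_pow_succ_of_recurrence
    (m := fun n => ∫ ω, noisyRec a b n (η · ω) ∂μ) ?_ ?_ (fun k => ?_) n
  · simp [noisyRec]
  · simp only [noisyRec, integral_const, probReal_univ, smul_eq_mul, one_mul]
    ring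
  · rw [integral_noisyRec_add_two hmeas hindep h_bdd, h_mean_η]
    linear_combination -(∫ ω, noisyRec a b k (η · ω) ∂μ) / 4 * hs_sq

theorem stmt_12 (a b ε : ℝ) (ha0 : 0 < a) (ha1 : a < 1) (hb : b > 1 - a)
    (hε0 : 0 < ε) (hε1 : ε < 1)
    {Ω : Type*} [MeasurableSpace Ω] (μ : Measure Ω) [IsProbabilityMeasure μ]
    (η : ℕ → Ω → ℝ) (hmeas : ∀ k, Measurable (η k))
    (hval : ∀ k ω, η k ω = 0 ∨ η k ω = 1)
    (hindep : iIndepFun η μ)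
    (hBer : ∀ k, μ {ω | η k ω = 1} = ENNReal.ofReal (1 - ε))
    (X : ℕ → Ω → ℝ) (hX0 : ∀ ω, X 0 ω = 1) (hX1 : ∀ ω, X 1 ω = a)
    (hrec : ∀ n : ℕ, 1 ≤ n → ∀ ω,
      X (n + 1) ω = a * X n ω + b * η (n - 1) ω * X (n - 1) ω) :
    ∀ n : ℕ,
      (∫ ω, X n ω ∂μ)
        = (((a + Real.sqrt (a ^ 2 + 4 * b * (1 - ε))) / 2) ^ (n + 1)
            - ((a - Real.sqrt (a ^ 2 + 4 * b * (1 - ε))) / 2) ^ (n + 1))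
          / ((a + Real.sqrt (a ^ 2 + 4 * b * (1 - ε))) / 2
            - (a - Real.sqrt (a ^ 2 + 4 * b * (1 - ε))) / 2) :=
  stmt_12_general a b ε ha1 hb hε1 μ η hmeas hval hindep hBer X hX0 hX1 hrec
end
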